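/- arXiv:2209.06502 — 2 statements merged into one kernel-verified Lean document; each statement's English description precedes it below -/
import Mathlib

section
/- Assume that the Green function G^Ω satisfies the two-sided estimate (G2), is jointly continuous on (Ω×Ω)∖{x=y}, and satisfies the Martin kernel condition (G4*). Fix ε > 0 and β > N−2s+2γ, set K^ε_β(t) := min(1, t^β ε^{−β}) for t ≥ 0, and define G^ε_β(x,y) := G^Ω(x,y)·K^ε_β(|x−y|) for x ≠ y in Ω and G^ε_β(x,x) := 0. Then the map (x,y) ↦ G^ε_β(x,y)/δ(y)^γ is uniformly continuous on Ω×Ω. -/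
open MeasureTheory Metric Set Filter Topology Function

noncomputable section

/-- Distance to the boundary of `Ω` (the function `δ`). -/
def dB {N : ℕ} (Ω : Set (EuclideanSpace ℝ (Fin N))) (x : EuclideanSpace ℝ (Fin N)) : ℝ :=
  Metric.infDist x (frontier Ω)

/-- Reference kernel appearing in the two-sided Green estimate (G2). -/
def greenRef {N : ℕ} (Ω : Set (EuclideanSpace ℝ (Fin N))) (s γ : ℝ)
    (x y : EuclideanSpace ℝ (Fin N)) : ℝ :=
  dist x y ^ (2 * s - (N : ℝ)) * (min (dB Ω x / dist x y) 1) ^ γ *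
    (min (dB Ω y / dist x y) 1) ^ γ

/-- Two-sided Green estimate (G2). -/
def GreenTwoSided {N : ℕ} (Ω : Set (EuclideanSpace ℝ (Fin N)))
    (G : EuclideanSpace ℝ (Fin N) → EuclideanSpace ℝ (Fin N) → ℝ) (s γ : ℝ) : Prop :=
  ∃ c₁ c₂ : ℝ, 0 < c₁ ∧ 0 < c₂ ∧
    ∀ x ∈ Ω, ∀ y ∈ Ω, x ≠ y →
      c₁ * greenRef Ω s γ x y ≤ G x y ∧ G x y ≤ c₂ * greenRef Ω s γ x y

/-- Green operator acting on functions: `𝔾[f](x) = ∫_Ω G(x,y) f(y) dy`. -/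
def greenFun {N : ℕ} (Ω : Set (EuclideanSpace ℝ (Fin N)))
    (G : EuclideanSpace ℝ (Fin N) → EuclideanSpace ℝ (Fin N) → ℝ)
    (f : EuclideanSpace ℝ (Fin N) → ℝ) (x : EuclideanSpace ℝ (Fin N)) : ℝ :=
  ∫ y in Ω, G x y * f y

/-- Green operator acting on a nonnegative measure: `𝔾[μ](x) = ∫ G(x,y) dμ(y)`. -/
def greenMeas {N : ℕ} (G : EuclideanSpace ℝ (Fin N) → EuclideanSpace ℝ (Fin N) → ℝ)
    (μ : Measure (EuclideanSpace ℝ (Fin N))) (x : EuclideanSpace ℝ (Fin N)) : ℝ :=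
  ∫ y, G x y ∂μ

/-- The cutoff function `K^ε_β(t) = min(1, t^β/ε^β)`. -/
def Keps (ε β t : ℝ) : ℝ := min 1 (t ^ β / ε ^ β)

-- The regularized Green kernel `G^ε_β(x,y) = G(x,y)·K^ε_β(|x−y|)` (zero on the diagonal).
open scoped Classical in
def Geps {N : ℕ} (G : EuclideanSpace ℝ (Fin N) → EuclideanSpace ℝ (Fin N) → ℝ)
    (ε β : ℝ) (p : EuclideanSpace ℝ (Fin N) × EuclideanSpace ℝ (Fin N)) : ℝ :=
  if p.1 = p.2 then 0 else G p.1 p.2 * Keps ε β (dist p.1 p.2)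


/-- Martin kernel condition (G4*). -/
def MartinCond {N : ℕ} (Ω : Set (EuclideanSpace ℝ (Fin N)))
    (G : EuclideanSpace ℝ (Fin N) → EuclideanSpace ℝ (Fin N) → ℝ) (γ : ℝ) : Prop :=
  ∃ M : EuclideanSpace ℝ (Fin N) → EuclideanSpace ℝ (Fin N) → ℝ,
    (∀ x₀ ∈ Ω, ∀ z₀ ∈ frontier Ω,
      Tendsto (fun p : EuclideanSpace ℝ (Fin N) × EuclideanSpace ℝ (Fin N) =>
          G p.1 p.2 / dB Ω p.2 ^ γ)
        (𝓝[Ω ×ˢ Ω] (x₀, z₀)) (𝓝 (M x₀ z₀))) ∧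
    ContinuousOn (Function.uncurry M) (Ω ×ˢ frontier Ω) ∧
    (∀ x ∈ Ω, ∀ z ∈ frontier Ω, 0 < M x z)


section Aux

variable {N : ℕ}

-- The continuous extension of `Geps/δ^γ` to the closed set `closure Ω ×ˢ closure Ω`.
open scoped Classical in
noncomputable def Fext (Ω : Set (EuclideanSpace ℝ (Fin N)))
    (G M : EuclideanSpace ℝ (Fin N) → EuclideanSpace ℝ (Fin N) → ℝ) (γ ε β : ℝ)
    (p : EuclideanSpace ℝ (Fin N) × EuclideanSpace ℝ (Fin N)) : ℝ :=
  if p.1 ∈ Ω ∧ p.2 ∈ Ω then Geps G ε β p / dB Ω p.2 ^ γ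
  else if p.1 ∈ Ω ∧ p.1 ≠ p.2 then M p.1 p.2 * Keps ε β (dist p.1 p.2)
  else 0

lemma keps_nonneg {ε β t : ℝ} (hε : 0 < ε) (ht : 0 ≤ t) : 0 ≤ Keps ε β t :=
  le_min zero_le_one
    (div_nonneg (Real.rpow_nonneg ht β) (Real.rpow_nonneg hε.le β))

lemma keps_le_one {ε β t : ℝ} : Keps ε β t ≤ 1 := min_le_left _ _

lemma keps_continuous {ε β : ℝ} (hβ : 0 ≤ β) : Continuous (Keps ε β) :=
  continuous_const.min ((Real.continuous_rpow_const hβ).div_const _)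

lemma keps_le_pow {ε β t : ℝ} : Keps ε β t ≤ t ^ β / ε ^ β := min_le_right _ _

/-- `r^e · K^ε_β(r) ≤ ε^e` for `r > 0`, `e ≤ 0`, `e + β > 0`. -/
lemma rpow_mul_keps_le {ε β e r : ℝ} (hε : 0 < ε) (hr : 0 < r) (he : e ≤ 0)
    (hα : 0 < e + β) : r ^ e * Keps ε β r ≤ ε ^ e := by
  have hβ0 : 0 ≤ β := by linarith
  rcases le_total r ε with h | h
  · have h1 : r ^ e * Keps ε β r ≤ r ^ e * (r ^ β / ε ^ β) :=
      mul_le_mul_of_nonneg_left keps_le_pow (Real.rpow_nonneg hr.le e)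
    have h2 : r ^ e * (r ^ β / ε ^ β) = r ^ (e + β) / ε ^ β := by
      rw [Real.rpow_add hr]; ring
    have h3 : r ^ (e + β) ≤ ε ^ (e + β) := Real.rpow_le_rpow hr.le h hα.le
    have h4 : r ^ (e + β) / ε ^ β ≤ ε ^ (e + β) / ε ^ β := by
      gcongr
    have h5 : ε ^ (e + β) / ε ^ β = ε ^ e := by
      rw [Real.rpow_add hε, mul_div_assoc,
        div_self (ne_of_gt (Real.rpow_pos_of_pos hε β)), mul_one]
    calc r ^ e * Keps ε β r ≤ r ^ e * (r ^ β / ε ^ β) := h1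
      _ = r ^ (e + β) / ε ^ β := h2
      _ ≤ ε ^ (e + β) / ε ^ β := h4
      _ = ε ^ e := h5
  · have h1 : r ^ e * Keps ε β r ≤ r ^ e * 1 :=
      mul_le_mul_of_nonneg_left keps_le_one (Real.rpow_nonneg hr.le e)
    have h2 : r ^ e ≤ ε ^ e := Real.rpow_le_rpow_of_nonpos hε h he
    calc r ^ e * Keps ε β r ≤ r ^ e * 1 := h1
      _ = r ^ e := mul_one _
      _ ≤ ε ^ e := h2

/-- Upper bound from (G2): `G(x,y) ≤ c₂ · r^{2s-N-2γ} · δ(x)^γ · δ(y)^γ`. -/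
lemma green_upper {Ω : Set (EuclideanSpace ℝ (Fin N))}
    {s γ c₂ : ℝ} (hγ0 : 0 < γ) (hc₂ : 0 ≤ c₂)
    {G : EuclideanSpace ℝ (Fin N) → EuclideanSpace ℝ (Fin N) → ℝ}
    (hup : ∀ x ∈ Ω, ∀ y ∈ Ω, x ≠ y → G x y ≤ c₂ * greenRef Ω s γ x y)
    {x y : EuclideanSpace ℝ (Fin N)} (hx : x ∈ Ω) (hy : y ∈ Ω) (hxy : x ≠ y) :
    G x y ≤ c₂ * dist x y ^ (2 * s - (N : ℝ) - 2 * γ) * (dB Ω x ^ γ * dB Ω y ^ γ) := by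
  have hr : 0 < dist x y := dist_pos.2 hxy
  have hdx : 0 ≤ dB Ω x := Metric.infDist_nonneg
  have hdy : 0 ≤ dB Ω y := Metric.infDist_nonneg
  refine (hup x hx y hy hxy).trans ?_
  have hminx : (min (dB Ω x / dist x y) 1) ^ γ ≤ (dB Ω x / dist x y) ^ γ :=
    Real.rpow_le_rpow (le_min (div_nonneg hdx hr.le) zero_le_one) (min_le_left _ _) hγ0.le
  have hminy : (min (dB Ω y / dist x y) 1) ^ γ ≤ (dB Ω y / dist x y) ^ γ :=
    Real.rpow_le_rpow (le_min (div_nonneg hdy hr.le) zero_le_one) (min_le_left _ _) hγ0.le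
  have key : greenRef Ω s γ x y ≤
      dist x y ^ (2 * s - (N : ℝ)) * (dB Ω x / dist x y) ^ γ * (dB Ω y / dist x y) ^ γ := by
    unfold greenRef
    have h0 : 0 ≤ dist x y ^ (2 * s - (N : ℝ)) := Real.rpow_nonneg hr.le _
    have h1 : 0 ≤ (min (dB Ω x / dist x y) 1) ^ γ :=
      Real.rpow_nonneg (le_min (div_nonneg hdx hr.le) zero_le_one) γ
    have h2 : 0 ≤ (min (dB Ω y / dist x y) 1) ^ γ :=
      Real.rpow_nonneg (le_min (div_nonneg hdy hr.le) zero_le_one) γ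
    have h3 : 0 ≤ (dB Ω x / dist x y) ^ γ := Real.rpow_nonneg (div_nonneg hdx hr.le) γ
    exact mul_le_mul (mul_le_mul_of_nonneg_left hminx h0) hminy h2
      (mul_nonneg h0 h3)
  have hre : dist x y ^ (2 * s - (N : ℝ)) * (dB Ω x / dist x y) ^ γ *
      (dB Ω y / dist x y) ^ γ
      = dist x y ^ (2 * s - (N : ℝ) - 2 * γ) * (dB Ω x ^ γ * dB Ω y ^ γ) := by
    have h2γ : dist x y ^ (2 * s - (N : ℝ)) =
        dist x y ^ (2 * s - (N : ℝ) - 2 * γ) * (dist x y ^ γ * dist x y ^ γ) := by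
      rw [← Real.rpow_add hr, ← Real.rpow_add hr]
      congr 1; ring
    rw [Real.div_rpow hdx hr.le, Real.div_rpow hdy hr.le, h2γ]
    have hrg : (0 : ℝ) < dist x y ^ γ := Real.rpow_pos_of_pos hr γ
    field_simp
  calc c₂ * greenRef Ω s γ x y
      ≤ c₂ * (dist x y ^ (2 * s - (N : ℝ)) * (dB Ω x / dist x y) ^ γ *
        (dB Ω y / dist x y) ^ γ) := mul_le_mul_of_nonneg_left key hc₂
    _ = c₂ * dist x y ^ (2 * s - (N : ℝ) - 2 * γ) * (dB Ω x ^ γ * dB Ω y ^ γ) := by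
        rw [hre]; ring

end Aux

/-- under (G2), joint continuity of `G^Ω` off the diagonal and the Martin kernel
condition (G4*), the map `(x,y) ↦ G^ε_β(x,y)/δ(y)^γ` is uniformly continuous on `Ω × Ω`. -/
theorem statement10
    {N : ℕ} (Ω : Set (EuclideanSpace ℝ (Fin N)))
    (hΩo : IsOpen Ω) (hΩb : Bornology.IsBounded Ω) (hΩne : Ω.Nonempty)
    (s γ : ℝ) (hs : s ∈ Set.Ioc (0 : ℝ) 1) (hγ : γ ∈ Set.Ioc (0 : ℝ) 1)
    (hN : 2 * s < (N : ℝ))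
    (G : EuclideanSpace ℝ (Fin N) → EuclideanSpace ℝ (Fin N) → ℝ)
    (hGmeas : Measurable (Function.uncurry G))
    (hGsym : ∀ x y, G x y = G y x)
    (hGpos : ∀ x ∈ Ω, ∀ y ∈ Ω, x ≠ y → 0 < G x y)
    (hG2 : GreenTwoSided Ω G s γ)
    (hG3 : ContinuousOn (Function.uncurry G)
      ((Ω ×ˢ Ω) \ {p : EuclideanSpace ℝ (Fin N) × EuclideanSpace ℝ (Fin N) | p.1 = p.2}))
    (hG4 : MartinCond Ω G γ)
    (ε β : ℝ) (hε : 0 < ε) (hβ : (N : ℝ) - 2 * s + 2 * γ < β) :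
    UniformContinuousOn
      (fun p : EuclideanSpace ℝ (Fin N) × EuclideanSpace ℝ (Fin N) =>
        Geps G ε β p / dB Ω p.2 ^ γ)
      (Ω ×ˢ Ω) := by
  classical
  obtain ⟨hs0, _hs1⟩ := hs
  obtain ⟨hγ0, _hγ1⟩ := hγ
  obtain ⟨c₁, c₂, hc₁, hc₂pos, hG2'⟩ := hG2
  obtain ⟨M, hMt, hMc, hMpos⟩ := hG4
  have hup : ∀ x ∈ Ω, ∀ y ∈ Ω, x ≠ y → G x y ≤ c₂ * greenRef Ω s γ x y :=
    fun a ha b hb hab => (hG2' a ha b hb hab).2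
  have he0 : 2 * s - (N : ℝ) - 2 * γ < 0 := by linarith
  have hα : 0 < (2 * s - (N : ℝ) - 2 * γ) + β := by linarith
  have hβ0 : 0 < β := by linarith
  -- basic facts about Ω
  have hNnz : (0 : ℝ) < (N : ℝ) := by linarith
  have hN0 : 0 < N := by exact_mod_cast hNnz
  haveI : Nonempty (Fin N) := ⟨⟨0, hN0⟩⟩
  have hΩnu : Ω ≠ univ := by
    intro h
    exact NormedSpace.unbounded_univ ℝ (EuclideanSpace ℝ (Fin N)) (h ▸ hΩb)
  have hfr : (frontier Ω).Nonempty := nonempty_frontier_iff.mpr ⟨hΩne, hΩnu⟩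
  have hdB0 : ∀ x, 0 ≤ dB Ω x := fun _ => Metric.infDist_nonneg
  have hdisj : ∀ w ∈ Ω, w ∉ frontier Ω := by
    intro w hw hfw; rw [hΩo.frontier_eq] at hfw; exact hfw.2 hw
  have hfrmem : ∀ w, w ∈ closure Ω → w ∉ Ω → w ∈ frontier Ω := by
    intro w hw hnw; rw [hΩo.frontier_eq]; exact ⟨hw, hnw⟩
  have hdBpos : ∀ x ∈ Ω, 0 < dB Ω x := by
    intro x hx
    exact (isClosed_frontier.notMem_iff_infDist_pos hfr).1 (hdisj x hx)
  have hdBcont : Continuous (dB Ω) := Metric.continuous_infDist_pt _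
  obtain ⟨z₀, hz₀⟩ := hfr
  -- bound D on dB over closure Ω
  obtain ⟨R, hR⟩ := (Metric.isBounded_iff_subset_closedBall z₀).1 hΩb
  set D : ℝ := max R 0 with hD_def
  have hD0 : 0 ≤ D := le_max_right _ _
  have hDle : ∀ x ∈ closure Ω, dB Ω x ≤ D := by
    intro x hx
    have h2 : x ∈ Metric.closedBall z₀ R :=
      (Metric.isClosed_closedBall.closure_subset_iff.2 hR) hx
    exact (Metric.infDist_le_dist_of_mem hz₀).trans
      ((Metric.mem_closedBall.1 h2).trans (le_max_left _ _))
  set K : Set (EuclideanSpace ℝ (Fin N) × EuclideanSpace ℝ (Fin N)) :=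
    closure Ω ×ˢ closure Ω with hK_def
  have hKcomp : IsCompact K := hΩb.isCompact_closure.prod hΩb.isCompact_closure
  set F := Fext Ω G M γ ε β with hF_def
  have hKnn : ∀ t : ℝ, 0 ≤ t → 0 ≤ Keps ε β t := fun t ht => keps_nonneg hε ht
  have hKdistcont : Continuous
      (fun q : EuclideanSpace ℝ (Fin N) × EuclideanSpace ℝ (Fin N) =>
        Keps ε β (dist q.1 q.2)) :=
    (keps_continuous hβ0.le).comp (continuous_fst.dist continuous_snd)
  have hδγcont : Continuous
      (fun q : EuclideanSpace ℝ (Fin N) × EuclideanSpace ℝ (Fin N) => dB Ω q.2 ^ γ) :=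
    (Real.continuous_rpow_const hγ0.le).comp (hdBcont.comp continuous_snd)
  have hδγcont1 : Continuous
      (fun q : EuclideanSpace ℝ (Fin N) × EuclideanSpace ℝ (Fin N) => dB Ω q.1 ^ γ) :=
    (Real.continuous_rpow_const hγ0.le).comp (hdBcont.comp continuous_fst)
  -- F agrees with the target on Ω ×ˢ Ω
  have hFeq : ∀ p ∈ Ω ×ˢ Ω, F p = Geps G ε β p / dB Ω p.2 ^ γ := by
    intro p hp
    rw [hF_def]; unfold Fext; rw [if_pos ⟨hp.1, hp.2⟩]
  -- nonnegativity of F on K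
  have hFnn : ∀ p ∈ K, 0 ≤ F p := by
    rintro p ⟨hp1, hp2⟩
    rw [hF_def]; unfold Fext
    split_ifs with h1 h2
    · unfold Geps
      split_ifs with hd
      · simp
      · exact div_nonneg (mul_nonneg (hGpos _ h1.1 _ h1.2 hd).le (hKnn _ dist_nonneg))
          (Real.rpow_nonneg (hdB0 _) γ)
    · have hp2f : p.2 ∈ frontier Ω := by
        refine hfrmem _ hp2 fun hmem => h1 ⟨h2.1, hmem⟩
      exact mul_nonneg (hMpos _ h2.1 _ hp2f).le (hKnn _ dist_nonneg)
    · exact le_refl 0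
  -- interior bound
  have hBnd1 : ∀ x ∈ Ω, ∀ y ∈ Ω, x ≠ y →
      G x y * Keps ε β (dist x y) / dB Ω y ^ γ ≤
        c₂ * (dist x y ^ (2 * s - (N : ℝ) - 2 * γ) * Keps ε β (dist x y)) * dB Ω x ^ γ := by
    intro x hx y hy hxy
    have hr : 0 < dist x y := dist_pos.2 hxy
    have hdy : (0 : ℝ) < dB Ω y ^ γ := Real.rpow_pos_of_pos (hdBpos y hy) γ
    have hG := green_upper hγ0 hc₂pos.le hup hx hy hxy
    have hK' := hKnn _ (dist_nonneg (x := x) (y := y))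
    rw [div_le_iff₀ hdy]
    calc G x y * Keps ε β (dist x y)
        ≤ c₂ * dist x y ^ (2 * s - (N : ℝ) - 2 * γ) * (dB Ω x ^ γ * dB Ω y ^ γ) *
            Keps ε β (dist x y) := mul_le_mul_of_nonneg_right hG hK'
      _ = c₂ * (dist x y ^ (2 * s - (N : ℝ) - 2 * γ) * Keps ε β (dist x y)) *
            dB Ω x ^ γ * dB Ω y ^ γ := by ring
  -- Martin kernel bound
  have hMbnd : ∀ x ∈ Ω, ∀ z ∈ frontier Ω,
      M x z ≤ c₂ * dist x z ^ (2 * s - (N : ℝ) - 2 * γ) * dB Ω x ^ γ := by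
    intro x hx z hz
    have hxz : x ≠ z := fun h => hdisj x hx (h ▸ hz)
    have hr : 0 < dist x z := dist_pos.2 hxz
    haveI hne : (𝓝[Ω ×ˢ Ω] ((x, z) :
        EuclideanSpace ℝ (Fin N) × EuclideanSpace ℝ (Fin N))).NeBot := by
      rw [← mem_closure_iff_nhdsWithin_neBot, closure_prod_eq]
      exact ⟨subset_closure hx, frontier_subset_closure hz⟩
    have hdistca : Continuous
        (fun q : EuclideanSpace ℝ (Fin N) × EuclideanSpace ℝ (Fin N) =>
          dist q.1 q.2) := continuous_fst.dist continuous_snd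
    have hevne : ∀ᶠ q in 𝓝[Ω ×ˢ Ω] ((x, z) :
        EuclideanSpace ℝ (Fin N) × EuclideanSpace ℝ (Fin N)), q.1 ≠ q.2 := by
      have : ∀ᶠ q in 𝓝[Ω ×ˢ Ω] ((x, z) :
          EuclideanSpace ℝ (Fin N) × EuclideanSpace ℝ (Fin N)), 0 < dist q.1 q.2 := by
        refine Filter.Tendsto.eventually_const_lt hr ?_
        exact (hdistca.continuousAt).continuousWithinAt
      exact this.mono fun q hq => (dist_pos.1 hq)
    have hle : ∀ᶠ q in 𝓝[Ω ×ˢ Ω] ((x, z) :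
        EuclideanSpace ℝ (Fin N) × EuclideanSpace ℝ (Fin N)),
        G q.1 q.2 / dB Ω q.2 ^ γ ≤
          c₂ * dist q.1 q.2 ^ (2 * s - (N : ℝ) - 2 * γ) * dB Ω q.1 ^ γ := by
      filter_upwards [eventually_mem_nhdsWithin, hevne] with q hq hq2
      have hGq := green_upper hγ0 hc₂pos.le hup hq.1 hq.2 hq2
      have hdyq : (0 : ℝ) < dB Ω q.2 ^ γ := Real.rpow_pos_of_pos (hdBpos _ hq.2) γ
      rw [div_le_iff₀ hdyq]
      calc G q.1 q.2 ≤ c₂ * dist q.1 q.2 ^ (2 * s - (N : ℝ) - 2 * γ) *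
            (dB Ω q.1 ^ γ * dB Ω q.2 ^ γ) := hGq
        _ = c₂ * dist q.1 q.2 ^ (2 * s - (N : ℝ) - 2 * γ) * dB Ω q.1 ^ γ *
            dB Ω q.2 ^ γ := by ring
    have hlim2 : Tendsto
        (fun q : EuclideanSpace ℝ (Fin N) × EuclideanSpace ℝ (Fin N) =>
          c₂ * dist q.1 q.2 ^ (2 * s - (N : ℝ) - 2 * γ) * dB Ω q.1 ^ γ)
        (𝓝[Ω ×ˢ Ω] ((x, z) : EuclideanSpace ℝ (Fin N) × EuclideanSpace ℝ (Fin N)))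
        (𝓝 (c₂ * dist x z ^ (2 * s - (N : ℝ) - 2 * γ) * dB Ω x ^ γ)) := by
      refine Tendsto.mono_left ?_ nhdsWithin_le_nhds
      refine ContinuousAt.tendsto ?_
      refine ContinuousAt.mul (ContinuousAt.mul continuousAt_const ?_)
        hδγcont1.continuousAt
      exact ContinuousAt.rpow_const hdistca.continuousAt (Or.inl hr.ne')
    exact le_of_tendsto_of_tendsto (hMt x hx z hz) hlim2 hle
  -- global bound: F ≤ C₀ · δ(x)^γ on K
  set C₀ : ℝ := c₂ * ε ^ (2 * s - (N : ℝ) - 2 * γ) with hC₀_def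
  have hC₀0 : 0 ≤ C₀ :=
    mul_nonneg hc₂pos.le (Real.rpow_nonneg hε.le _)
  have hgK : ∀ r : ℝ, 0 < r →
      r ^ (2 * s - (N : ℝ) - 2 * γ) * Keps ε β r ≤ ε ^ (2 * s - (N : ℝ) - 2 * γ) :=
    fun r hr => rpow_mul_keps_le hε hr he0.le hα
  have hBnd3 : ∀ p ∈ K, F p ≤ C₀ * dB Ω p.1 ^ γ := by
    rintro p ⟨hp1, hp2⟩
    have hRHS : 0 ≤ C₀ * dB Ω p.1 ^ γ :=
      mul_nonneg hC₀0 (Real.rpow_nonneg (hdB0 _) γ)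
    rw [hF_def]; unfold Fext
    split_ifs with h1 h2
    · unfold Geps
      split_ifs with hd
      · simpa using hRHS
      · have hr : 0 < dist p.1 p.2 := dist_pos.2 hd
        refine (hBnd1 _ h1.1 _ h1.2 hd).trans ?_
        rw [hC₀_def]
        have := hgK _ hr
        calc c₂ * (dist p.1 p.2 ^ (2 * s - (N : ℝ) - 2 * γ) * Keps ε β (dist p.1 p.2)) *
              dB Ω p.1 ^ γ
            ≤ c₂ * ε ^ (2 * s - (N : ℝ) - 2 * γ) * dB Ω p.1 ^ γ := by
              refine mul_le_mul_of_nonneg_right ?_ (Real.rpow_nonneg (hdB0 _) γ)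
              exact mul_le_mul_of_nonneg_left this hc₂pos.le
          _ = c₂ * ε ^ (2 * s - (N : ℝ) - 2 * γ) * dB Ω p.1 ^ γ := rfl
    · have hp2f : p.2 ∈ frontier Ω := hfrmem _ hp2 fun hmem => h1 ⟨h2.1, hmem⟩
      have hr : 0 < dist p.1 p.2 := dist_pos.2 h2.2
      have hM := hMbnd _ h2.1 _ hp2f
      have hKnn' := hKnn _ (dist_nonneg (x := p.1) (y := p.2))
      calc M p.1 p.2 * Keps ε β (dist p.1 p.2)
          ≤ c₂ * dist p.1 p.2 ^ (2 * s - (N : ℝ) - 2 * γ) * dB Ω p.1 ^ γ *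
              Keps ε β (dist p.1 p.2) := mul_le_mul_of_nonneg_right hM hKnn'
        _ = c₂ * (dist p.1 p.2 ^ (2 * s - (N : ℝ) - 2 * γ) * Keps ε β (dist p.1 p.2)) *
              dB Ω p.1 ^ γ := by ring
        _ ≤ c₂ * ε ^ (2 * s - (N : ℝ) - 2 * γ) * dB Ω p.1 ^ γ := by
              refine mul_le_mul_of_nonneg_right ?_ (Real.rpow_nonneg (hdB0 _) γ)
              exact mul_le_mul_of_nonneg_left (hgK _ hr) hc₂pos.le
        _ = C₀ * dB Ω p.1 ^ γ := by rw [hC₀_def]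
    · exact hRHS
  -- Continuity of F on K
  have hFcont : ContinuousOn F K := by
    intro p hp
    obtain ⟨hp1c, hp2c⟩ := hp
    by_cases hp1 : p.1 ∈ Ω
    · by_cases hp2 : p.2 ∈ Ω
      · by_cases hdiag : p.1 = p.2
        · -- Case B: interior diagonal point
          have hFp : F p = 0 := by
            rw [hF_def]; unfold Fext
            rw [if_pos ⟨hp1, hp2⟩]; unfold Geps; rw [if_pos hdiag]; simp
          show Tendsto F (𝓝[K] p) (𝓝 (F p))
          rw [hFp]
          set Cb : ℝ := c₂ * D ^ γ / ε ^ β with hCb_def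
          have hevΩ : ∀ᶠ q in 𝓝[K] p, q ∈ Ω ×ˢ Ω :=
            mem_nhdsWithin_of_mem_nhds ((hΩo.prod hΩo).mem_nhds ⟨hp1, hp2⟩)
          have hnn : ∀ᶠ q in 𝓝[K] p, (0 : ℝ) ≤ F q :=
            eventually_mem_nhdsWithin.mono fun q hq => hFnn q hq
          have hub : ∀ᶠ q in 𝓝[K] p,
              F q ≤ Cb * dist q.1 q.2 ^ ((2 * s - (N : ℝ) - 2 * γ) + β) := by
            filter_upwards [hevΩ] with q hq
            have hrhs0 : (0 : ℝ) ≤ Cb * dist q.1 q.2 ^ ((2 * s - (N : ℝ) - 2 * γ) + β) :=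
              mul_nonneg (div_nonneg (mul_nonneg hc₂pos.le (Real.rpow_nonneg hD0 γ))
                (Real.rpow_nonneg hε.le β)) (Real.rpow_nonneg dist_nonneg _)
            by_cases hd : q.1 = q.2
            · have hq0 : F q = 0 := by
                rw [hF_def]; unfold Fext
                rw [if_pos ⟨hq.1, hq.2⟩]; unfold Geps; rw [if_pos hd]; simp
              rw [hq0]; exact hrhs0
            · have hr : 0 < dist q.1 q.2 := dist_pos.2 hd
              have hFq : F q = G q.1 q.2 * Keps ε β (dist q.1 q.2) / dB Ω q.2 ^ γ := by
                rw [hF_def]; unfold Fext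
                rw [if_pos ⟨hq.1, hq.2⟩]; unfold Geps; rw [if_neg hd]
              rw [hFq]
              refine (hBnd1 _ hq.1 _ hq.2 hd).trans ?_
              have h1 : dist q.1 q.2 ^ (2 * s - (N : ℝ) - 2 * γ) * Keps ε β (dist q.1 q.2) ≤
                  dist q.1 q.2 ^ ((2 * s - (N : ℝ) - 2 * γ) + β) / ε ^ β := by
                have h1a := mul_le_mul_of_nonneg_left
                  (keps_le_pow (ε := ε) (β := β) (t := dist q.1 q.2))
                  (Real.rpow_nonneg (dist_nonneg (x := q.1) (y := q.2))
                    (2 * s - (N : ℝ) - 2 * γ))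
                refine h1a.trans_eq ?_
                rw [Real.rpow_add hr]
                ring
              have h2 : dB Ω q.1 ^ γ ≤ D ^ γ :=
                Real.rpow_le_rpow (hdB0 _) (hDle _ (subset_closure hq.1)) hγ0.le
              calc c₂ * (dist q.1 q.2 ^ (2 * s - (N : ℝ) - 2 * γ) *
                    Keps ε β (dist q.1 q.2)) * dB Ω q.1 ^ γ
                  ≤ c₂ * (dist q.1 q.2 ^ ((2 * s - (N : ℝ) - 2 * γ) + β) / ε ^ β) * D ^ γ := by
                    refine mul_le_mul (mul_le_mul_of_nonneg_left h1 hc₂pos.le) h2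
                      (Real.rpow_nonneg (hdB0 _) γ) ?_
                    exact mul_nonneg hc₂pos.le (div_nonneg (Real.rpow_nonneg dist_nonneg _)
                      (Real.rpow_nonneg hε.le _))
                _ = Cb * dist q.1 q.2 ^ ((2 * s - (N : ℝ) - 2 * γ) + β) := by
                    rw [hCb_def]; ring
          have hrhs : Tendsto
              (fun q : EuclideanSpace ℝ (Fin N) × EuclideanSpace ℝ (Fin N) =>
                Cb * dist q.1 q.2 ^ ((2 * s - (N : ℝ) - 2 * γ) + β)) (𝓝[K] p) (𝓝 0) := by
            have hc : Continuous fun q : EuclideanSpace ℝ (Fin N) × EuclideanSpace ℝ (Fin N) =>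
                Cb * dist q.1 q.2 ^ ((2 * s - (N : ℝ) - 2 * γ) + β) :=
              continuous_const.mul ((Real.continuous_rpow_const hα.le).comp
                (continuous_fst.dist continuous_snd))
            have h0 : dist p.1 p.2 = 0 := by rw [hdiag, dist_self]
            have := (hc.continuousAt (x := p)).continuousWithinAt (s := K)
            have hval : Cb * dist p.1 p.2 ^ ((2 * s - (N : ℝ) - 2 * γ) + β) = 0 := by
              rw [h0, Real.zero_rpow hα.ne', mul_zero]
            rw [ContinuousWithinAt, hval] at this
            exact this
          exact tendsto_of_tendsto_of_tendsto_of_le_of_le' tendsto_const_nhds hrhs hnn hub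
        · -- Case C: interior off-diagonal point
          have hU : IsOpen ((Ω ×ˢ Ω) \
              {q : EuclideanSpace ℝ (Fin N) × EuclideanSpace ℝ (Fin N) | q.1 = q.2}) :=
            (hΩo.prod hΩo).sdiff isClosed_diagonal
          have hpU : p ∈ (Ω ×ˢ Ω) \
              {q : EuclideanSpace ℝ (Fin N) × EuclideanSpace ℝ (Fin N) | q.1 = q.2} :=
            ⟨⟨hp1, hp2⟩, hdiag⟩
          have hδpos : (0 : ℝ) < dB Ω p.2 ^ γ := Real.rpow_pos_of_pos (hdBpos _ hp2) γ
          have hGca : ContinuousAt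
              (fun q : EuclideanSpace ℝ (Fin N) × EuclideanSpace ℝ (Fin N) => G q.1 q.2) p :=
            hG3.continuousAt (hU.mem_nhds hpU)
          have hgca : ContinuousAt
              (fun q : EuclideanSpace ℝ (Fin N) × EuclideanSpace ℝ (Fin N) =>
                G q.1 q.2 * Keps ε β (dist q.1 q.2) / dB Ω q.2 ^ γ) p :=
            (hGca.mul hKdistcont.continuousAt).div hδγcont.continuousAt hδpos.ne'
          refine (hgca.congr ?_).continuousWithinAt
          filter_upwards [hU.mem_nhds hpU] with q hq
          show _ = F q
          rw [hF_def]; unfold Fext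
          rw [if_pos ⟨hq.1.1, hq.1.2⟩]; unfold Geps
          rw [if_neg (show ¬ q.1 = q.2 from hq.2)]
      · -- Case D: boundary in the second variable
        have hp2f : p.2 ∈ frontier Ω := hfrmem _ hp2c hp2
        have hxz : p.1 ≠ p.2 := fun h => hp2 (h ▸ hp1)
        have hrp : 0 < dist p.1 p.2 := dist_pos.2 hxz
        have hFp : F p = M p.1 p.2 * Keps ε β (dist p.1 p.2) := by
          rw [hF_def]; unfold Fext
          rw [if_neg (fun h => hp2 h.2), if_pos ⟨hp1, hxz⟩]
        show Tendsto F (𝓝[K] p) (𝓝 (F p))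
        rw [hFp]
        have hsplit : K ⊆ (closure Ω ×ˢ Ω) ∪ (closure Ω ×ˢ frontier Ω) := by
          rintro q ⟨hq1, hq2⟩
          by_cases h : q.2 ∈ Ω
          · exact Or.inl ⟨hq1, h⟩
          · exact Or.inr ⟨hq1, hfrmem _ hq2 h⟩
        have hVmem : (Ω ×ˢ (univ : Set (EuclideanSpace ℝ (Fin N)))) ∈ 𝓝 p :=
          (hΩo.prod isOpen_univ).mem_nhds ⟨hp1, mem_univ _⟩
        have hKt : Tendsto
            (fun q : EuclideanSpace ℝ (Fin N) × EuclideanSpace ℝ (Fin N) =>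
              Keps ε β (dist q.1 q.2)) (𝓝 p) (𝓝 (Keps ε β (dist p.1 p.2))) :=
          hKdistcont.continuousAt
        have tA : Tendsto F (𝓝[closure Ω ×ˢ Ω] p)
            (𝓝 (M p.1 p.2 * Keps ε β (dist p.1 p.2))) := by
          have hAeq : 𝓝[closure Ω ×ˢ Ω] p = 𝓝[Ω ×ˢ Ω] p := by
            rw [nhdsWithin_restrict' _ hVmem]
            congr 1
            ext q
            constructor
            · rintro ⟨⟨-, h2⟩, h1, -⟩; exact ⟨h1, h2⟩
            · rintro ⟨h1, h2⟩; exact ⟨⟨subset_closure h1, h2⟩, h1, mem_univ _⟩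
          rw [hAeq]
          have hMt' : Tendsto
              (fun q : EuclideanSpace ℝ (Fin N) × EuclideanSpace ℝ (Fin N) =>
                G q.1 q.2 / dB Ω q.2 ^ γ) (𝓝[Ω ×ˢ Ω] p) (𝓝 (M p.1 p.2)) := by
            have := hMt p.1 hp1 p.2 hp2f
            simpa using this
          have hlim := hMt'.mul (hKt.mono_left nhdsWithin_le_nhds)
          have hevne : ∀ᶠ q in 𝓝[Ω ×ˢ Ω] p, (0 : ℝ) < dist q.1 q.2 :=
            Filter.Tendsto.eventually_const_lt hrp
              ((continuous_fst.dist continuous_snd).continuousAt.continuousWithinAt)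
          have hEq : (fun q : EuclideanSpace ℝ (Fin N) × EuclideanSpace ℝ (Fin N) =>
              G q.1 q.2 / dB Ω q.2 ^ γ * Keps ε β (dist q.1 q.2)) =ᶠ[𝓝[Ω ×ˢ Ω] p] F := by
            filter_upwards [eventually_mem_nhdsWithin, hevne] with q hq hqd
            have hd : q.1 ≠ q.2 := fun h => absurd hqd (by rw [h, dist_self]; exact lt_irrefl 0)
            show _ = F q
            rw [hF_def]; unfold Fext
            rw [if_pos ⟨hq.1, hq.2⟩]; unfold Geps; rw [if_neg hd]
            rw [mul_div_right_comm]
          exact Filter.Tendsto.congr' hEq hlim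
        have tB : Tendsto F (𝓝[closure Ω ×ˢ frontier Ω] p)
            (𝓝 (M p.1 p.2 * Keps ε β (dist p.1 p.2))) := by
          have hBeq : 𝓝[closure Ω ×ˢ frontier Ω] p = 𝓝[Ω ×ˢ frontier Ω] p := by
            rw [nhdsWithin_restrict' _ hVmem]
            congr 1
            ext q
            constructor
            · rintro ⟨⟨-, h2⟩, h1, -⟩; exact ⟨h1, h2⟩
            · rintro ⟨h1, h2⟩; exact ⟨⟨subset_closure h1, h2⟩, h1, mem_univ _⟩
          rw [hBeq]
          have hMc' : Tendsto
              (fun q : EuclideanSpace ℝ (Fin N) × EuclideanSpace ℝ (Fin N) => M q.1 q.2)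
              (𝓝[Ω ×ˢ frontier Ω] p) (𝓝 (M p.1 p.2)) := hMc p ⟨hp1, hp2f⟩
          have hlim := hMc'.mul (hKt.mono_left nhdsWithin_le_nhds)
          have hEq : (fun q : EuclideanSpace ℝ (Fin N) × EuclideanSpace ℝ (Fin N) =>
              M q.1 q.2 * Keps ε β (dist q.1 q.2)) =ᶠ[𝓝[Ω ×ˢ frontier Ω] p] F := by
            filter_upwards [eventually_mem_nhdsWithin] with q hq
            have hd : q.1 ≠ q.2 := fun h => hdisj q.1 hq.1 (h ▸ hq.2)
            show _ = F q
            rw [hF_def]; unfold Fext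
            rw [if_neg (fun h => hdisj q.2 h.2 hq.2), if_pos ⟨hq.1, hd⟩]
          exact Filter.Tendsto.congr' hEq hlim
        exact (tendsto_sup.mpr ⟨tA, tB⟩).mono_left
          ((nhdsWithin_mono p hsplit).trans (nhdsWithin_union p _ _).le)
    · -- Case A: boundary in the first variable
      have hp1f : p.1 ∈ frontier Ω := hfrmem _ hp1c hp1
      have hFp : F p = 0 := by
        rw [hF_def]; unfold Fext
        rw [if_neg (fun h => hp1 h.1), if_neg (fun h => hp1 h.1)]
      show Tendsto F (𝓝[K] p) (𝓝 (F p))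
      rw [hFp]
      have hnn : ∀ᶠ q in 𝓝[K] p, (0 : ℝ) ≤ F q :=
        eventually_mem_nhdsWithin.mono fun q hq => hFnn q hq
      have hub : ∀ᶠ q in 𝓝[K] p, F q ≤ C₀ * dB Ω q.1 ^ γ :=
        eventually_mem_nhdsWithin.mono fun q hq => hBnd3 q hq
      have hrhs : Tendsto
          (fun q : EuclideanSpace ℝ (Fin N) × EuclideanSpace ℝ (Fin N) =>
            C₀ * dB Ω q.1 ^ γ) (𝓝[K] p) (𝓝 0) := by
        have hc : Continuous fun q : EuclideanSpace ℝ (Fin N) × EuclideanSpace ℝ (Fin N) =>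
            C₀ * dB Ω q.1 ^ γ := continuous_const.mul hδγcont1
        have h0 : dB Ω p.1 = 0 := Metric.infDist_zero_of_mem hp1f
        have := (hc.continuousAt (x := p)).continuousWithinAt (s := K)
        have hval : C₀ * dB Ω p.1 ^ γ = 0 := by
          rw [h0, Real.zero_rpow hγ0.ne', mul_zero]
        rw [ContinuousWithinAt, hval] at this
        exact this
      exact tendsto_of_tendsto_of_tendsto_of_le_of_le' tendsto_const_nhds hrhs hnn hub
  -- conclude
  have hucF : UniformContinuousOn F K :=
    hKcomp.uniformContinuousOn_of_continuous hFcont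
  have hsub : (Ω ×ˢ Ω) ⊆ K := prod_mono subset_closure subset_closure
  have hucF2 : UniformContinuousOn F (Ω ×ˢ Ω) :=
    hucF.mono_left (inf_le_inf_left _ (principal_mono.2 (prod_mono hsub hsub)))
  exact Filter.Tendsto.congr'
    (Filter.eventually_inf_principal.mpr (Filter.Eventually.of_forall fun q hq => by
      rw [hFeq q.1 hq.1, hFeq q.2 hq.2])) hucF2
end
end

section
/- Assume that the Green function G^Ω satisfies the two-sided estimate (G2) and is jointly continuous on (Ω×Ω)∖{x=y}, and that the Martin kernel M^Ω exists and satisfies M^Ω(x,z) ≍ δ(x)^γ/|x−z|^{N−2s+2γ} for x ∈ Ω, z ∈ ∂Ω. Let 1 < p < p* = (N+γ)/(N+γ−2s). Then for every z ∈ ∂Ω, lim_{Ω∋x→z} 𝔾^Ω[M^Ω(·,z)^p](x)/M^Ω(x,z) = 0. -/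
open MeasureTheory Metric Set Filter Topology Function
open scoped ENNReal NNReal

noncomputable section

/-!
By (G2) and the Martin-kernel estimate, `G(x,y) M(y,z)^p` is at most a constant times the model
integrand `greenRef(x,y) · martinRef(y,z)^p`.  Put `r = |x-y|`, `t = |y-z|`, `d = δ(x)`,
`D = |x-z|` and `q = N - 2s + 2γ`.  Where `2r < max(D, t)` the model integrand is
`≲ d^γ D^{γ(p-1) - qp} r^{2s-N}` on the ball `B(x, D)`; elsewhere it is
`≲ d^γ D^{ε-q} t^{E-ε-N}`, with `E = N + γ - (N + γ - 2s) p`, which is positive exactly because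
`p < p*`, and any `0 < ε < E`, `ε ≤ q`.  Both powers are integrable on balls, and integrating gives
`𝔾[M(·,z)^p](x) ≲ D^ε d^γ D^{-q} ≲ D^ε M(x,z)`.
-/

lemma rpow_le_two_rpow_mul_rpow {c x y : ℝ} (hx : 0 < x) (hc : c ≤ 0) (hxy : x ≤ 2 * y) :
    y ^ c ≤ 2 ^ (-c) * x ^ c := by
  calc y ^ c ≤ (x / 2) ^ c := Real.rpow_le_rpow_of_nonpos (by positivity) (by linarith) hc
    _ = 2 ^ (-c) * x ^ c := by
      rw [Real.div_rpow hx.le zero_le_two, Real.rpow_neg zero_le_two, div_eq_inv_mul]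

lemma min_div_one_eq_div_max {d r : ℝ} (hd : 0 < d) (hr : 0 < r) :
    min (d / r) 1 = d / max d r := by
  rcases le_total d r with h | h
  · rw [max_eq_right h, min_eq_left ((div_le_one hr).2 h)]
  · rw [max_eq_left h, div_self hd.ne', min_eq_right ((one_le_div hr).2 h)]

lemma min_div_one_rpow_le_one {γ d r : ℝ} (hγ : 0 ≤ γ) (hd : 0 ≤ d) (hr : 0 ≤ r) :
    min (d / r) 1 ^ γ ≤ 1 :=
  Real.rpow_le_one (le_min (div_nonneg hd hr) zero_le_one) (min_le_right _ _) hγ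

lemma min_div_one_rpow_le {γ d r : ℝ} (hγ : 0 ≤ γ) (hd : 0 ≤ d) (hr : 0 < r) :
    min (d / r) 1 ^ γ ≤ d ^ γ * r ^ (-γ) := by
  calc min (d / r) 1 ^ γ ≤ (d / r) ^ γ :=
        Real.rpow_le_rpow (le_min (div_nonneg hd hr.le) zero_le_one) (min_le_left _ _) hγ
    _ = d ^ γ * r ^ (-γ) := by rw [Real.div_rpow hd hr.le, Real.rpow_neg hr.le, div_eq_mul_inv]

lemma rpow_div_rpow_rpow {γ p q δ t : ℝ} (hδ : 0 ≤ δ) (ht : 0 < t) :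
    (δ ^ γ / t ^ q) ^ p = δ ^ (γ * p) * t ^ (-(q * p)) := by
  rw [Real.div_rpow (Real.rpow_nonneg hδ γ) (Real.rpow_nonneg ht.le q), ← Real.rpow_mul hδ,
    ← Real.rpow_mul ht.le, Real.rpow_neg ht.le, div_eq_mul_inv]

/-- In the variables `r = |x-y|`, `t = |y-z|`, `d = δ(x)`, `δ = δ(y)`, with `a = 2s - N` and
`q = N - 2s + 2γ`, this is the model integrand `greenRef(x,y) · martinRef(y,z)^p`. -/
def greenMartinKernel (a γ p q r t d δ : ℝ) : ℝ :=
  r ^ a * min (d / r) 1 ^ γ * min (δ / r) 1 ^ γ * (δ ^ γ / t ^ q) ^ p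

section GreenMartinKernel

variable {a γ p q ε r t d δ D : ℝ}

lemma greenMartinKernel_le_near (hγ : 0 ≤ γ) (hp : 1 ≤ p) (hq : 0 ≤ q) (hr : 0 < r)
    (ht : 0 < t) (hd : 0 < d) (hδ : 0 < δ) (hδdr : δ ≤ d + r) (hrD : r ≤ D) (hdD : d ≤ D)
    (hDt : D ≤ 2 * t) :
    greenMartinKernel a γ p q r t d δ ≤
      2 ^ (γ * p + q * p) * d ^ γ * D ^ (γ * (p - 1) - q * p) * r ^ a := by
  have hD : 0 < D := hd.trans_le hdD
  set m := max d r
  have hm : 0 < m := lt_max_of_lt_left hd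
  -- `min (d / r) 1 = d / m` and `δ ≤ d + r ≤ 2 m`
  have hdδ : min (d / r) 1 ^ γ * δ ^ (γ * p) ≤ 2 ^ (γ * p) * d ^ γ * D ^ (γ * (p - 1)) :=
    calc min (d / r) 1 ^ γ * δ ^ (γ * p) ≤ (d / m) ^ γ * (2 * m) ^ (γ * p) := by
          rw [min_div_one_eq_div_max hd hr]
          gcongr
          linarith [le_max_left d r, le_max_right d r]
      _ = 2 ^ (γ * p) * d ^ γ * m ^ (γ * (p - 1)) := by
          rw [Real.div_rpow hd.le hm.le, Real.mul_rpow zero_le_two hm.le,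
            show γ * p = γ + γ * (p - 1) by ring, Real.rpow_add hm]
          field_simp
      _ ≤ 2 ^ (γ * p) * d ^ γ * D ^ (γ * (p - 1)) := by
          have : 0 ≤ γ * (p - 1) := mul_nonneg hγ (by linarith)
          gcongr
          exact max_le hdD hrD
  have htD : t ^ (-(q * p)) ≤ 2 ^ (q * p) * D ^ (-(q * p)) := by
    simpa only [neg_neg] using rpow_le_two_rpow_mul_rpow (c := -(q * p)) hD
      (neg_nonpos.2 (mul_nonneg hq (by linarith))) hDt
  calc greenMartinKernel a γ p q r t d δ
      = r ^ a * min (δ / r) 1 ^ γ * (min (d / r) 1 ^ γ * δ ^ (γ * p)) * t ^ (-(q * p)) := by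
        rw [greenMartinKernel, rpow_div_rpow_rpow hδ.le ht]; ring
    _ ≤ r ^ a * 1 * (2 ^ (γ * p) * d ^ γ * D ^ (γ * (p - 1))) *
          (2 ^ (q * p) * D ^ (-(q * p))) := by
        gcongr
        exact min_div_one_rpow_le_one hγ hδ.le hr.le
    _ = _ := by
        rw [sub_eq_add_neg (γ * (p - 1)), Real.rpow_add hD, Real.rpow_add two_pos]; ring

lemma greenMartinKernel_le_far (hγ : 0 ≤ γ) (hp : 0 ≤ p) (hε : 0 ≤ ε)
    (hb : a - 2 * γ + ε ≤ 0) (hr : 0 < r) (ht : 0 < t) (hd : 0 < d) (hδ : 0 < δ) (hD : 0 < D)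
    (hDr : D ≤ 2 * r) (htr : t ≤ 2 * r) (hδt : δ ≤ t) :
    greenMartinKernel a γ p q r t d δ ≤
      2 ^ (2 * γ - a) * d ^ γ * D ^ (a - 2 * γ + ε) * t ^ (γ * (1 + p) - q * p - ε) := by
  have hrD := rpow_le_two_rpow_mul_rpow hD hb hDr
  have hrt := rpow_le_two_rpow_mul_rpow ht (neg_nonpos.2 hε) htr
  have hr_split : r ^ a * r ^ (-γ) * r ^ (-γ) = r ^ (a - 2 * γ + ε) * r ^ (-ε) := by
    rw [← Real.rpow_add hr, ← Real.rpow_add hr, ← Real.rpow_add hr]; ring_nf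
  calc greenMartinKernel a γ p q r t d δ
      ≤ r ^ a * (d ^ γ * r ^ (-γ)) * (δ ^ γ * r ^ (-γ)) * (δ ^ (γ * p) * t ^ (-(q * p))) := by
        rw [greenMartinKernel, rpow_div_rpow_rpow hδ.le ht]
        gcongr
        · exact min_div_one_rpow_le hγ hd.le hr
        · exact min_div_one_rpow_le hγ hδ.le hr
    _ = d ^ γ * (r ^ (a - 2 * γ + ε) * r ^ (-ε)) * (δ ^ γ * δ ^ (γ * p)) * t ^ (-(q * p)) := by
        rw [← hr_split]; ring
    _ ≤ d ^ γ * ((2 ^ (-(a - 2 * γ + ε)) * D ^ (a - 2 * γ + ε)) * (2 ^ (-(-ε)) * t ^ (-ε))) *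
          (t ^ γ * t ^ (γ * p)) * t ^ (-(q * p)) := by
        gcongr
    _ = _ := by
        rw [show 2 * γ - a = -(a - 2 * γ + ε) + -(-ε) by ring, Real.rpow_add two_pos,
          show γ * (1 + p) - q * p - ε = -ε + γ + γ * p + -(q * p) by ring,
          Real.rpow_add ht, Real.rpow_add ht, Real.rpow_add ht]
        ring

end GreenMartinKernel

section BallIntegrals

variable {E : Type*} [NormedAddCommGroup E] [NormedSpace ℝ E] [FiniteDimensional ℝ E]
  [MeasurableSpace E] [BorelSpace E] (μ : Measure E) [μ.IsAddHaarMeasure]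

theorem lintegral_ball_dist_rpow (e : ℝ) (c : E) {R : ℝ} (hR : 0 < R) :
    ∫⁻ y in ball c R, ENNReal.ofReal (dist y c ^ e) ∂μ =
      ENNReal.ofReal (R ^ (Module.finrank ℝ E + e)) *
        ∫⁻ y in ball 0 1, ENNReal.ofReal (‖y‖ ^ e) ∂μ := by
  set f : E → ℝ≥0∞ := fun w => ENNReal.ofReal (‖w‖ ^ e)
  have hf : Measurable f := by fun_prop
  have htrans : (ball c R).indicator (fun y => ENNReal.ofReal (dist y c ^ e)) =
      fun y => (ball 0 R).indicator f (y - c) := by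
    ext y; simp [indicator, f, dist_eq_norm]
  have hscale : (fun w => (ball (0 : E) R).indicator f (R • w)) =
      fun w => ENNReal.ofReal (R ^ e) * (ball 0 1).indicator f w := by
    ext w
    simp only [indicator, f, mem_ball_zero_iff, norm_smul, Real.norm_eq_abs, abs_of_pos hR]
    split_ifs with h1 h2 h2
    · rw [← ENNReal.ofReal_mul (by positivity), Real.mul_rpow hR.le (norm_nonneg _)]
    · exact absurd (by nlinarith) h2
    · exact absurd (by nlinarith) h1
    · simp
  have hdilate : ∫⁻ w, (ball (0 : E) R).indicator f w ∂μ =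
      ENNReal.ofReal (R ^ Module.finrank ℝ E) *
        ∫⁻ w, (ball (0 : E) R).indicator f (R • w) ∂μ := by
    rw [← lintegral_map (hf.indicator measurableSet_ball) (measurable_const_smul R),
      Measure.map_addHaar_smul μ hR.ne', lintegral_smul_measure, smul_eq_mul, ← mul_assoc,
      ← ENNReal.ofReal_mul (by positivity), abs_of_pos (by positivity),
      mul_inv_cancel₀ (by positivity), ENNReal.ofReal_one, one_mul]
  rw [← lintegral_indicator measurableSet_ball, ← lintegral_indicator measurableSet_ball, htrans,
    lintegral_sub_right_eq_self (fun y => (ball 0 R).indicator f y) c, hdilate, hscale,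
    lintegral_const_mul _ (hf.indicator measurableSet_ball), ← mul_assoc,
    ← ENNReal.ofReal_mul (by positivity), Real.rpow_add hR, Real.rpow_natCast]

theorem lintegral_ball_norm_rpow_lt_top (hd : 1 ≤ Module.finrank ℝ E) {e : ℝ}
    (he : -(Module.finrank ℝ E : ℝ) < e) :
    ∫⁻ y in ball (0 : E) 1, ENNReal.ofReal (‖y‖ ^ e) ∂μ < ∞ := by
  refine Integrable.lintegral_lt_top
    (integrableOn_ball_of_norm_le_rpow (C := 1) (α := -e) hd (by linarith) ?_
      (measurable_norm.pow_const e).aestronglyMeasurable)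
  refine ae_of_all _ fun y => ?_
  rw [neg_neg, one_mul, Real.norm_of_nonneg (Real.rpow_nonneg (norm_nonneg y) e)]

end BallIntegrals

def unitBallRpowIntegral (N : ℕ) (e : ℝ) : ℝ :=
  (∫⁻ y in ball (0 : EuclideanSpace ℝ (Fin N)) 1, ENNReal.ofReal (‖y‖ ^ e)).toReal

lemma unitBallRpowIntegral_nonneg (N : ℕ) (e : ℝ) : 0 ≤ unitBallRpowIntegral N e :=
  ENNReal.toReal_nonneg

def ballPowerTerm {α : Type*} [PseudoMetricSpace α] (c : α) (ρ A e : ℝ) : α → ℝ≥0∞ :=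
  (ball c ρ).indicator fun y => ENNReal.ofReal (A * dist y c ^ e)

lemma measurable_ballPowerTerm {E : Type*} [NormedAddCommGroup E] [MeasurableSpace E]
    [OpensMeasurableSpace E] (c : E) (ρ A e : ℝ) : Measurable (ballPowerTerm c ρ A e) :=
  (Measurable.ennreal_ofReal (by fun_prop)).indicator measurableSet_ball

lemma lintegral_ballPowerTerm {N : ℕ} (hN : 0 < N) (c : EuclideanSpace ℝ (Fin N)) {ρ A e : ℝ}
    (he : -(N : ℝ) < e) (hρ : 0 < ρ) (hA : 0 ≤ A) :
    ∫⁻ y, ballPowerTerm c ρ A e y =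
      ENNReal.ofReal (A * ρ ^ (N + e) * unitBallRpowIntegral N e) := by
  have hfin := finrank_euclideanSpace_fin (𝕜 := ℝ) (n := N)
  simp_rw [ballPowerTerm, ENNReal.ofReal_mul hA]
  rw [lintegral_indicator measurableSet_ball, lintegral_const_mul _ (by fun_prop),
    lintegral_ball_dist_rpow volume e c hρ, hfin, ENNReal.ofReal_mul (by positivity),
    ENNReal.ofReal_mul (by positivity), unitBallRpowIntegral,
    ENNReal.ofReal_toReal (lintegral_ball_norm_rpow_lt_top volume (by rw [hfin]; exact hN)
      (by rw [hfin]; exact he)).ne,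
    mul_assoc]

def martinRef {N : ℕ} (Ω : Set (EuclideanSpace ℝ (Fin N))) (s γ : ℝ)
    (x z : EuclideanSpace ℝ (Fin N)) : ℝ :=
  dB Ω x ^ γ / dist x z ^ ((N : ℝ) - 2 * s + 2 * γ)

section ModelKernels

variable {N : ℕ} {Ω : Set (EuclideanSpace ℝ (Fin N))} {s γ p q E ε R₀ : ℝ}
  {x y z : EuclideanSpace ℝ (Fin N)}

lemma greenRef_mul_martinRef_rpow :
    greenRef Ω s γ x y * martinRef Ω s γ y z ^ p =
      greenMartinKernel (2 * s - N) γ p (N - 2 * s + 2 * γ) (dist x y) (dist y z) (dB Ω x)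
        (dB Ω y) :=
  rfl

lemma ne_of_mem_of_mem_frontier (hΩ : IsOpen Ω) (hz : z ∈ frontier Ω) (hx : x ∈ Ω) : x ≠ z := by
  rintro rfl
  exact (hΩ.inter_frontier_eq.subset ⟨hx, hz⟩ : x ∈ (∅ : Set _))

lemma dB_pos (hΩ : IsOpen Ω) (hz : z ∈ frontier Ω) (hx : x ∈ Ω) : 0 < dB Ω x :=
  (isClosed_frontier.notMem_iff_infDist_pos ⟨z, hz⟩).1 fun hx' =>
    (hΩ.inter_frontier_eq.subset ⟨hx, hx'⟩ : x ∈ (∅ : Set _))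

lemma martinRef_pos (hΩ : IsOpen Ω) (hz : z ∈ frontier Ω) (hx : x ∈ Ω) :
    0 < martinRef Ω s γ x z := by
  have := dB_pos hΩ hz hx
  have := dist_pos.2 (ne_of_mem_of_mem_frontier hΩ hz hx)
  unfold martinRef
  positivity

lemma greenRef_self (hsN : 2 * s < N) (x : EuclideanSpace ℝ (Fin N)) :
    greenRef Ω s γ x x = 0 := by
  simp [greenRef, Real.zero_rpow (by linarith : 2 * s - (N : ℝ) ≠ 0)]

lemma ofReal_greenRef_mul_martinRef_rpow_le (hΩ : IsOpen Ω) (hz : z ∈ frontier Ω)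
    (hγ : 0 ≤ γ) (hp : 1 ≤ p) (hsN : 2 * s < N) (hq : q = N - 2 * s + 2 * γ) (hε : 0 ≤ ε)
    (hεq : ε ≤ q) (hR₀ : Ω ⊆ ball z R₀) (hx : x ∈ Ω) (hy : y ∈ Ω) :
    ENNReal.ofReal (greenRef Ω s γ x y * martinRef Ω s γ y z ^ p) ≤
      ballPowerTerm x (dist x z)
          (2 ^ (γ * p + q * p) * dB Ω x ^ γ * dist x z ^ (γ * (p - 1) - q * p)) (2 * s - N) y +
        ballPowerTerm z R₀ (2 ^ q * dB Ω x ^ γ * dist x z ^ (ε - q))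
          (γ * (1 + p) - q * p - ε) y := by
  rcases eq_or_ne y x with rfl | hyx
  · simp [greenRef_self hsN]
  have hr : 0 < dist x y := dist_pos.2 hyx.symm
  have ht : 0 < dist y z := dist_pos.2 (ne_of_mem_of_mem_frontier hΩ hz hy)
  have hD : 0 < dist x z := dist_pos.2 (ne_of_mem_of_mem_frontier hΩ hz hx)
  have hd := dB_pos hΩ hz hx
  have hδ := dB_pos hΩ hz hy
  have hδt : dB Ω y ≤ dist y z := infDist_le_dist_of_mem hz
  have hdD : dB Ω x ≤ dist x z := infDist_le_dist_of_mem hz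
  have hδdr : dB Ω y ≤ dB Ω x + dist x y := by
    rw [dist_comm]; exact infDist_le_infDist_add_dist
  have hDrt : dist x z ≤ dist x y + dist y z := dist_triangle x y z
  have htrD : dist y z ≤ dist x y + dist x z := by
    linarith [dist_triangle y x z, dist_comm x y]
  rw [greenRef_mul_martinRef_rpow, ← hq]
  by_cases hfar : dist x z ≤ 2 * dist x y ∧ dist y z ≤ 2 * dist x y
  · refine le_add_left ?_
    rw [ballPowerTerm, indicator_of_mem (hR₀ hy), show q = 2 * γ - (2 * s - N) by linarith,
      show ε - (2 * γ - (2 * s - N)) = 2 * s - N - 2 * γ + ε by ring]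
    exact ENNReal.ofReal_le_ofReal (greenMartinKernel_le_far hγ (by linarith) hε (by linarith)
      hr ht hd hδ hD hfar.1 hfar.2 hδt)
  · have hnear : dist x y < dist x z ∧ dist x z ≤ 2 * dist y z := by
      rcases not_and_or.1 hfar with h | h <;> constructor <;> linarith
    refine le_add_right ?_
    rw [ballPowerTerm, indicator_of_mem (mem_ball.2 (by rw [dist_comm]; exact hnear.1)),
      dist_comm y x]
    exact ENNReal.ofReal_le_ofReal (greenMartinKernel_le_near hγ hp (by linarith) hr ht hd hδ
      hδdr hnear.1.le hdD hnear.2)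

lemma lintegral_greenRef_mul_martinRef_rpow_le (hΩ : IsOpen Ω) (hz : z ∈ frontier Ω)
    (hs : 0 < s) (hγ : 0 ≤ γ) (hp : 1 ≤ p) (hsN : 2 * s < N) (hq : q = N - 2 * s + 2 * γ)
    (hE : E = N + γ - (N + γ - 2 * s) * p) (hε : 0 ≤ ε) (hεE : ε < E) (hεq : ε ≤ q)
    (hR₀ : Ω ⊆ ball z R₀) (hx : x ∈ Ω) :
    ∫⁻ y in Ω, ENNReal.ofReal (greenRef Ω s γ x y * martinRef Ω s γ y z ^ p) ≤
      ENNReal.ofReal (dB Ω x ^ γ *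
        (2 ^ (γ * p + q * p) * unitBallRpowIntegral N (2 * s - N) * dist x z ^ (E - q) +
          2 ^ q * unitBallRpowIntegral N (γ * (1 + p) - q * p - ε) * R₀ ^ (E - ε) *
            dist x z ^ (ε - q))) := by
  have hN : 0 < N := (Nat.cast_pos (α := ℝ)).1 (by linarith)
  have hD : 0 < dist x z := dist_pos.2 (ne_of_mem_of_mem_frontier hΩ hz hx)
  have hR₀D : dist x z < R₀ := mem_ball.1 (hR₀ hx)
  have hd := dB_pos hΩ hz hx
  have hκ := unitBallRpowIntegral_nonneg N
  calc ∫⁻ y in Ω, ENNReal.ofReal (greenRef Ω s γ x y * martinRef Ω s γ y z ^ p)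
      ≤ ∫⁻ y, (ballPowerTerm x (dist x z)
            (2 ^ (γ * p + q * p) * dB Ω x ^ γ * dist x z ^ (γ * (p - 1) - q * p)) (2 * s - N) y +
          ballPowerTerm z R₀ (2 ^ q * dB Ω x ^ γ * dist x z ^ (ε - q))
            (γ * (1 + p) - q * p - ε) y) :=
        (setLIntegral_mono
          ((measurable_ballPowerTerm _ _ _ _).add (measurable_ballPowerTerm _ _ _ _))
          fun y hy =>
            ofReal_greenRef_mul_martinRef_rpow_le hΩ hz hγ hp hsN hq hε hεq hR₀ hx hy).trans
        (setLIntegral_le_lintegral _ _)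
    _ = ENNReal.ofReal (2 ^ (γ * p + q * p) * dB Ω x ^ γ * dist x z ^ (γ * (p - 1) - q * p) *
            dist x z ^ (N + (2 * s - N)) * unitBallRpowIntegral N (2 * s - N)) +
          ENNReal.ofReal (2 ^ q * dB Ω x ^ γ * dist x z ^ (ε - q) *
            R₀ ^ (N + (γ * (1 + p) - q * p - ε)) *
              unitBallRpowIntegral N (γ * (1 + p) - q * p - ε)) := by
        rw [lintegral_add_left (measurable_ballPowerTerm _ _ _ _),
          lintegral_ballPowerTerm hN _ (by linarith) hD (by positivity),
          lintegral_ballPowerTerm hN _ (by rw [hq, hE] at *; linarith) (hD.trans hR₀D)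
            (by positivity)]
    _ = _ := by
        have hR₀0 : 0 ≤ R₀ := (hD.trans hR₀D).le
        rw [← ENNReal.ofReal_add (mul_nonneg (by positivity) (hκ _))
            (mul_nonneg (by positivity) (hκ _)),
          show (N : ℝ) + (γ * (1 + p) - q * p - ε) = E - ε by rw [hq, hE]; ring,
          show E - q = (γ * (p - 1) - q * p) + (N + (2 * s - N)) by rw [hq, hE]; ring,
          Real.rpow_add hD (γ * (p - 1) - q * p)]
        congr 1
        ring

theorem exists_lintegral_greenRef_mul_martinRef_rpow_le (hΩ : IsOpen Ω)
    (hΩb : Bornology.IsBounded Ω) (hs : 0 < s) (hγ : 0 ≤ γ) (hsN : 2 * s < N)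
    (hp1 : 1 ≤ p) (hp2 : p < (N + γ) / (N + γ - 2 * s)) (hz : z ∈ frontier Ω) :
    ∃ C ε : ℝ, 0 ≤ C ∧ 0 < ε ∧ ∀ x ∈ Ω, ∫⁻ y in Ω, ENNReal.ofReal (greenRef Ω s γ x y *
      martinRef Ω s γ y z ^ p) ≤ ENNReal.ofReal (C * dist x z ^ ε * martinRef Ω s γ x z) := by
  obtain ⟨R₀, hR₀0, hR₀⟩ := hΩb.subset_ball_lt 0 z
  set q : ℝ := N - 2 * s + 2 * γ with hq
  set E : ℝ := N + γ - (N + γ - 2 * s) * p with hE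
  have hE0 : 0 < E := by
    have := (lt_div_iff₀ (by linarith : (0 : ℝ) < N + γ - 2 * s)).1 hp2
    linarith
  set ε : ℝ := min E q / 2 with hε
  have hε0 : 0 < ε := half_pos (lt_min hE0 (by linarith))
  have hεE : ε < E := by linarith [min_le_left E q]
  have hεq : ε ≤ q := by linarith [min_le_right E q]
  have hκ := unitBallRpowIntegral_nonneg N
  set κ₁ := unitBallRpowIntegral N (2 * s - N)
  set κ₂ := unitBallRpowIntegral N (γ * (1 + p) - q * p - ε)
  refine ⟨(2 ^ (γ * p + q * p) * κ₁ + 2 ^ q * κ₂) * R₀ ^ (E - ε), ε,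
    by have := hκ (2 * s - N); have := hκ (γ * (1 + p) - q * p - ε); positivity, hε0,
    fun x hx => (lintegral_greenRef_mul_martinRef_rpow_le hΩ hz hs hγ hp1 hsN hq hE hε0.le hεE
      hεq hR₀ hx).trans (ENNReal.ofReal_le_ofReal ?_)⟩
  have hD : 0 < dist x z := dist_pos.2 (ne_of_mem_of_mem_frontier hΩ hz hx)
  have hd := dB_pos hΩ hz hx
  have hfold : dist x z ^ (E - q) ≤ R₀ ^ (E - ε) * dist x z ^ (ε - q) := by
    rw [show E - q = (E - ε) + (ε - q) by ring, Real.rpow_add hD]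
    gcongr
    exact (mem_ball.1 (hR₀ hx)).le
  have := hκ (2 * s - N)
  calc dB Ω x ^ γ * (2 ^ (γ * p + q * p) * κ₁ * dist x z ^ (E - q) +
        2 ^ q * κ₂ * R₀ ^ (E - ε) * dist x z ^ (ε - q))
      ≤ dB Ω x ^ γ * (2 ^ (γ * p + q * p) * κ₁ * (R₀ ^ (E - ε) * dist x z ^ (ε - q)) +
        2 ^ q * κ₂ * R₀ ^ (E - ε) * dist x z ^ (ε - q)) := by gcongr
    _ = _ := by
        rw [mul_assoc _ (dist x z ^ ε), martinRef, ← hq, Real.rpow_sub hD]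
        ring

end ModelKernels

lemma integral_le_of_lintegral_ofReal_le {α : Type*} [MeasurableSpace α] {μ : Measure α}
    {f g : α → ℝ} {B : ℝ} (hfg : ∀ᵐ a ∂μ, 0 ≤ f a ∧ f a ≤ g a)
    (hg : ∫⁻ a, ENNReal.ofReal (g a) ∂μ ≤ ENNReal.ofReal B) (hB : 0 ≤ B) :
    ∫ a, f a ∂μ ≤ B := by
  by_cases hf : Integrable f μ
  · rw [integral_eq_lintegral_of_nonneg_ae (hfg.mono fun a h => h.1) hf.aestronglyMeasurable]
    refine ENNReal.toReal_le_of_le_ofReal hB ((lintegral_mono_ae ?_).trans hg)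
    filter_upwards [hfg] with a h using ENNReal.ofReal_le_ofReal h.2
  · rw [integral_undef hf]
    exact hB

section GreenOperator

variable {N : ℕ} [NeZero N] {Ω : Set (EuclideanSpace ℝ (Fin N))}
  {G : EuclideanSpace ℝ (Fin N) → EuclideanSpace ℝ (Fin N) → ℝ} {x : EuclideanSpace ℝ (Fin N)}

lemma ae_restrict_mem_ne (hΩ : MeasurableSet Ω) (x : EuclideanSpace ℝ (Fin N)) :
    ∀ᵐ y ∂volume.restrict Ω, y ∈ Ω ∧ y ≠ x := by
  filter_upwards [ae_restrict_mem hΩ, ae_restrict_of_ae (Measure.ae_ne volume x)] with y h1 h2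
    using ⟨h1, h2⟩

lemma greenFun_nonneg {f : EuclideanSpace ℝ (Fin N) → ℝ} (hΩ : MeasurableSet Ω)
    (hG : ∀ y ∈ Ω, y ≠ x → 0 ≤ G x y) (hf : ∀ y ∈ Ω, 0 ≤ f y) : 0 ≤ greenFun Ω G f x :=
  integral_nonneg_of_ae <| by
    filter_upwards [ae_restrict_mem_ne hΩ x] with y hy using mul_nonneg (hG y hy.1 hy.2) (hf y hy.1)

lemma greenFun_rpow_le {G₀ : EuclideanSpace ℝ (Fin N) → EuclideanSpace ℝ (Fin N) → ℝ}
    {f f₀ : EuclideanSpace ℝ (Fin N) → ℝ} {cG cf p B : ℝ}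
    (hΩ : MeasurableSet Ω) (hcG : 0 ≤ cG) (hcf : 0 < cf) (hp : 0 ≤ p) (hB : 0 ≤ B)
    (hG : ∀ y ∈ Ω, y ≠ x → 0 ≤ G x y ∧ G x y ≤ cG * G₀ x y)
    (hf : ∀ y ∈ Ω, 0 ≤ f y ∧ f y ≤ cf * f₀ y)
    (h₀ : ∫⁻ y in Ω, ENNReal.ofReal (G₀ x y * f₀ y ^ p) ≤ ENNReal.ofReal B) :
    greenFun Ω G (fun y => f y ^ p) x ≤ cG * cf ^ p * B := by
  refine integral_le_of_lintegral_ofReal_le (g := fun y => cG * cf ^ p * (G₀ x y * f₀ y ^ p))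
    ?_ ?_ (by positivity)
  · filter_upwards [ae_restrict_mem_ne hΩ x] with y ⟨hy, hyx⟩
    obtain ⟨hG0, hGle⟩ := hG y hy hyx
    obtain ⟨hf0, hfle⟩ := hf y hy
    have hf₀ : 0 ≤ f₀ y := nonneg_of_mul_nonneg_right (hf0.trans hfle) hcf
    refine ⟨mul_nonneg hG0 (Real.rpow_nonneg hf0 p), ?_⟩
    calc G x y * f y ^ p ≤ (cG * G₀ x y) * (cf * f₀ y) ^ p := by
          gcongr
          exact hG0.trans hGle
      _ = cG * cf ^ p * (G₀ x y * f₀ y ^ p) := by rw [Real.mul_rpow hcf.le hf₀]; ring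
  · simp_rw [ENNReal.ofReal_mul (by positivity : 0 ≤ cG * cf ^ p)]
    rw [lintegral_const_mul' _ _ ENNReal.ofReal_ne_top, ENNReal.ofReal_mul (by positivity)]
    gcongr

lemma greenFun_rpow_div_le {s γ p cG cM₁ cM₂ C ε : ℝ} {z : EuclideanSpace ℝ (Fin N)}
    {M : EuclideanSpace ℝ (Fin N) → EuclideanSpace ℝ (Fin N) → ℝ} (hΩ : IsOpen Ω)
    (hz : z ∈ frontier Ω) (hx : x ∈ Ω) (hp : 0 ≤ p) (hC : 0 ≤ C) (hcG : 0 ≤ cG)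
    (hcM₁ : 0 < cM₁) (hcM₂ : 0 < cM₂)
    (hG : ∀ y ∈ Ω, y ≠ x → 0 ≤ G x y ∧ G x y ≤ cG * greenRef Ω s γ x y)
    (hM : ∀ y ∈ Ω, cM₁ * martinRef Ω s γ y z ≤ M y z ∧ M y z ≤ cM₂ * martinRef Ω s γ y z)
    (hmodel : ∫⁻ y in Ω, ENNReal.ofReal (greenRef Ω s γ x y * martinRef Ω s γ y z ^ p) ≤
      ENNReal.ofReal (C * dist x z ^ ε * martinRef Ω s γ x z)) :
    0 ≤ greenFun Ω G (fun y => M y z ^ p) x / M x z ∧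
      greenFun Ω G (fun y => M y z ^ p) x / M x z ≤ cG * cM₂ ^ p * C / cM₁ * dist x z ^ ε := by
  have hMnonneg : ∀ y ∈ Ω, 0 ≤ M y z := fun y hy =>
    (mul_nonneg hcM₁.le (martinRef_pos hΩ hz hy).le).trans (hM y hy).1
  have hm : 0 < martinRef Ω s γ x z := martinRef_pos hΩ hz hx
  have hMpos : 0 < M x z := (mul_pos hcM₁ hm).trans_le (hM x hx).1
  refine ⟨div_nonneg (greenFun_nonneg hΩ.measurableSet (fun y hy hyx => (hG y hy hyx).1)
    fun y hy => Real.rpow_nonneg (hMnonneg y hy) p) hMpos.le, ?_⟩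
  rw [div_le_iff₀ hMpos]
  calc greenFun Ω G (fun y => M y z ^ p) x
      ≤ cG * cM₂ ^ p * (C * dist x z ^ ε * martinRef Ω s γ x z) :=
        greenFun_rpow_le (f₀ := fun y => martinRef Ω s γ y z) hΩ.measurableSet hcG hcM₂ hp
          (by positivity) hG (fun y hy => ⟨hMnonneg y hy, (hM y hy).2⟩) hmodel
    _ = cG * cM₂ ^ p * C / cM₁ * dist x z ^ ε * (cM₁ * martinRef Ω s γ x z) := by
        field_simp
    _ ≤ cG * cM₂ ^ p * C / cM₁ * dist x z ^ ε * M x z := by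
        gcongr
        exact (hM x hx).1

end GreenOperator

theorem statement19_general
    {N : ℕ} (Ω : Set (EuclideanSpace ℝ (Fin N)))
    (hΩo : IsOpen Ω) (hΩb : Bornology.IsBounded Ω)
    (s γ : ℝ) (hs : s ∈ Set.Ioc (0 : ℝ) 1) (hγ : γ ∈ Set.Ioc (0 : ℝ) 1)
    (hN : 2 * s < (N : ℝ))
    (G : EuclideanSpace ℝ (Fin N) → EuclideanSpace ℝ (Fin N) → ℝ)
    (hGpos : ∀ x ∈ Ω, ∀ y ∈ Ω, x ≠ y → 0 < G x y)
    (hG2 : GreenTwoSided Ω G s γ)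
    (M : EuclideanSpace ℝ (Fin N) → EuclideanSpace ℝ (Fin N) → ℝ)
    -- two-sided estimate for the Martin kernel
    (hMest : ∃ c₁ c₂ : ℝ, 0 < c₁ ∧ 0 < c₂ ∧ ∀ x ∈ Ω, ∀ z ∈ frontier Ω,
      c₁ * (dB Ω x ^ γ / dist x z ^ ((N : ℝ) - 2 * s + 2 * γ)) ≤ M x z ∧
      M x z ≤ c₂ * (dB Ω x ^ γ / dist x z ^ ((N : ℝ) - 2 * s + 2 * γ)))
    (p : ℝ) (hp1 : 1 < p) (hp2 : p < ((N : ℝ) + γ) / ((N : ℝ) + γ - 2 * s))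
    (z : EuclideanSpace ℝ (Fin N)) (hz : z ∈ frontier Ω) :
    Tendsto (fun x => greenFun Ω G (fun y => M y z ^ p) x / M x z) (𝓝[Ω] z) (𝓝 0) := by
  have : NeZero N := ⟨by rintro rfl; norm_num at hN; linarith [hs.1]⟩
  obtain ⟨C, ε, hC, hε, hmodel⟩ := exists_lintegral_greenRef_mul_martinRef_rpow_le hΩo hΩb
    hs.1 hγ.1.le hN hp1.le hp2 hz
  obtain ⟨_, cG, _, hcG, hG⟩ := hG2
  obtain ⟨cM₁, cM₂, hcM₁, hcM₂, hM⟩ := hMest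
  have hratio := fun x (hx : x ∈ Ω) => greenFun_rpow_div_le hΩo hz hx (by linarith) hC hcG.le
    hcM₁ hcM₂ (fun y hy hyx => ⟨(hGpos x hx y hy hyx.symm).le, (hG x hx y hy hyx.symm).2⟩)
    (fun y hy => hM y hy z hz) (hmodel x hx)
  refine squeeze_zero' (eventually_nhdsWithin_of_forall fun x hx => (hratio x hx).1)
    (eventually_nhdsWithin_of_forall fun x hx => (hratio x hx).2) ?_
  set K := cG * cM₂ ^ p * C / cM₁
  have hlim : Tendsto (fun x => K * dist x z ^ ε) (𝓝 z) (𝓝 (K * dist z z ^ ε)) :=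
    ((tendsto_id.dist tendsto_const_nhds).rpow_const (Or.inr hε.le)).const_mul K
  rw [dist_self, Real.zero_rpow hε.ne', mul_zero] at hlim
  exact hlim.mono_left nhdsWithin_le_nhds

/-- assume (G2), joint continuity of `G^Ω` off the diagonal, and that the Martin
kernel `M^Ω` exists and satisfies `M^Ω(x,z) ≍ δ(x)^γ/|x−z|^{N−2s+2γ}`.  Then for
`1 < p < p* = (N+γ)/(N+γ−2s)` and every `z ∈ ∂Ω`,
`𝔾^Ω[M^Ω(·,z)^p](x)/M^Ω(x,z) → 0` as `Ω ∋ x → z`. -/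
theorem statement19
    {N : ℕ} (Ω : Set (EuclideanSpace ℝ (Fin N)))
    (hΩo : IsOpen Ω) (hΩb : Bornology.IsBounded Ω) (hΩne : Ω.Nonempty)
    (s γ : ℝ) (hs : s ∈ Set.Ioc (0 : ℝ) 1) (hγ : γ ∈ Set.Ioc (0 : ℝ) 1)
    (hN : 2 * s < (N : ℝ))
    (G : EuclideanSpace ℝ (Fin N) → EuclideanSpace ℝ (Fin N) → ℝ)
    (hGmeas : Measurable (Function.uncurry G))
    (hGsym : ∀ x y, G x y = G y x)
    (hGpos : ∀ x ∈ Ω, ∀ y ∈ Ω, x ≠ y → 0 < G x y)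
    (hG2 : GreenTwoSided Ω G s γ)
    (hG3 : ContinuousOn (Function.uncurry G)
      ((Ω ×ˢ Ω) \ {p : EuclideanSpace ℝ (Fin N) × EuclideanSpace ℝ (Fin N) | p.1 = p.2}))
    -- the Martin kernel: `M(x,z) = lim_{Ω ∋ y → z} G(x,y)/δ(y)^γ`
    (M : EuclideanSpace ℝ (Fin N) → EuclideanSpace ℝ (Fin N) → ℝ)
    (hMlim : ∀ x ∈ Ω, ∀ z ∈ frontier Ω,
      Tendsto (fun y => G x y / dB Ω y ^ γ) (𝓝[Ω] z) (𝓝 (M x z)))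
    -- two-sided estimate for the Martin kernel
    (hMest : ∃ c₁ c₂ : ℝ, 0 < c₁ ∧ 0 < c₂ ∧ ∀ x ∈ Ω, ∀ z ∈ frontier Ω,
      c₁ * (dB Ω x ^ γ / dist x z ^ ((N : ℝ) - 2 * s + 2 * γ)) ≤ M x z ∧
      M x z ≤ c₂ * (dB Ω x ^ γ / dist x z ^ ((N : ℝ) - 2 * s + 2 * γ)))
    (p : ℝ) (hp1 : 1 < p) (hp2 : p < ((N : ℝ) + γ) / ((N : ℝ) + γ - 2 * s))
    (z : EuclideanSpace ℝ (Fin N)) (hz : z ∈ frontier Ω) :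
    Tendsto (fun x => greenFun Ω G (fun y => M y z ^ p) x / M x z) (𝓝[Ω] z) (𝓝 0) :=
  statement19_general Ω hΩo hΩb s γ hs hγ hN G hGpos hG2 M hMest p hp1 hp2 z hz
end
end
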